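/- Let k ≥ 1, W a graphon, and C a μ^{⊗k}-relatively complete sub-σ-algebra of 𝓑^{⊗k} such that L²(X^k, C, μ^{⊗k}) is invariant under every operator of the family 𝕋^k_W. Then for every term 𝔽 over 𝓕^k, t(𝔽, (E_C ∘ T_F ∘ E_C)_{F ∈ 𝓕^k}) = t(𝔽, 𝕋^k_W), where T_F denotes the operator of 𝕋^k_W indexed by the symbol F. -/

import Mathlib

open MeasureTheory

noncomputable section

/-- The index set `𝓕^k = {N_j : j ∈ [k]} ∪ {A_{ij} : i ≠ j ∈ [k]}` of neighbor and
adjacency symbols. -/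
inductive FSym (k : ℕ) : Type where
  | N (j : Fin k) : FSym k
  | A (i j : Fin k) (h : i ≠ j) : FSym k

/-- Terms over `𝓕^k`: generated from `𝟙` by composition with symbols of `𝓕^k` and
binary (Schur) products. -/
inductive FTerm (k : ℕ) : Type where
  | one : FTerm k
  | comp (F : FSym k) (t : FTerm k) : FTerm k
  | mul (t₁ t₂ : FTerm k) : FTerm k

/-- The constant-one function as an element of `L²` of a finite measure. -/
noncomputable def lpOne {Z : Type*} [MeasurableSpace Z] (ν : Measure Z)
    [IsFiniteMeasure ν] : Lp ℝ 2 ν :=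
  Lp.const 2 ν (1 : ℝ)

open Classical in
/-- Pointwise product of two `L²` elements, as an element of `L²` (defined to be `0` in the
degenerate case where the product fails to be square-integrable; for the bounded functions
arising as homomorphism functions the product is always square-integrable). -/
noncomputable def lpMul {Z : Type*} [MeasurableSpace Z] {ν : Measure Z}
    (g₁ g₂ : Lp ℝ 2 ν) : Lp ℝ 2 ν :=
  if h : MemLp (⇑g₁ * ⇑g₂) 2 ν then h.toLp _ else 0

/-- The homomorphism function `f^{𝔽,𝕋}` of a term `𝔽` in a family `𝕋 = (T_F)_{F ∈ 𝓕^k}`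
of operators on `L²(Z, ν)`: `f^{𝟙,𝕋} = 1`, `f^{F∘𝔽,𝕋} = T_F f^{𝔽,𝕋}` and
`f^{𝔽₁·𝔽₂,𝕋} = f^{𝔽₁,𝕋} ⬝ f^{𝔽₂,𝕋}` (pointwise product). -/
noncomputable def homFun {Z : Type*} [MeasurableSpace Z] (ν : Measure Z)
    [IsFiniteMeasure ν] {k : ℕ} (T : FSym k → (Lp ℝ 2 ν →L[ℝ] Lp ℝ 2 ν)) :
    FTerm k → Lp ℝ 2 ν
  | FTerm.one => lpOne ν
  | FTerm.comp F t => T F (homFun ν T t)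
  | FTerm.mul t₁ t₂ => lpMul (homFun ν T t₁) (homFun ν T t₂)

/-- The homomorphism density `t(𝔽, 𝕋) = ⟨1, f^{𝔽,𝕋}⟩` of a term in a family of
operators. -/
noncomputable def homDen {Z : Type*} [MeasurableSpace Z] (ν : Measure Z)
    [IsFiniteMeasure ν] {k : ℕ} (T : FSym k → (Lp ℝ 2 ν →L[ℝ] Lp ℝ 2 ν))
    (t : FTerm k) : ℝ :=
  ∫ z, (homFun ν T t : Z → ℝ) z ∂ν

/-- A graphon: symmetric measurable `W : X × X → [0,1]`. -/
structure IsGraphon {X : Type*} [MeasurableSpace X] (W : X → X → ℝ) : Prop where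
  measurable : Measurable (Function.uncurry W)
  symm : ∀ x y, W x y = W y x
  nonneg : ∀ x y, 0 ≤ W x y
  le_one : ∀ x y, W x y ≤ 1

/-- A sub-σ-algebra, wrapped in a structure (so that it does not interfere with
instance resolution). -/
structure SubSigma (α : Type*) where
  σ : MeasurableSpace α

/-- `m'` is a `μ`-relatively complete sub-σ-algebra of the ambient σ-algebra `mα`. -/
def RelComplete {X : Type*} [mα : MeasurableSpace X]
    (μ : Measure X) (m' : SubSigma X) : Prop :=
  ∀ Z Z₀ : Set X, MeasurableSet[mα] Z → MeasurableSet[m'.σ] Z₀ →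
    μ (symmDiff Z Z₀) = 0 → MeasurableSet[m'.σ] Z

/-- The conditional expectation `E_m` as an operator on `L²`, i.e. the orthogonal projection
onto the closed subspace `lpMeas` of (a.e.) `m`-measurable `L²` functions. -/
noncomputable def condExpCLM {X : Type*} {m : MeasurableSpace X} [mα : MeasurableSpace X]
    (μ : Measure X) (hm : m ≤ mα) : Lp ℝ 2 μ →L[ℝ] Lp ℝ 2 μ :=
  (lpMeas ℝ ℝ m 2 μ).subtypeL.comp (condExpL2 ℝ ℝ hm)


/-!
The subspace `L²(C)` contains `1`, is closed under pointwise products and, by assumption,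
under every `T_F`; hence it contains every homomorphism function of `𝕋`. Since `E_C` fixes
`L²(C)`, the compressed operators `E_C ∘ T_F ∘ E_C` agree with `T_F` there, so by induction
on terms both families have the same homomorphism functions, and a fortiori the same densities.
-/

section Compression

variable {Z : Type*} {m : MeasurableSpace Z} [mZ : MeasurableSpace Z]

theorem condExpCLM_apply_of_mem_lpMeas (ν : Measure Z) (hm : m ≤ mZ)
    {f : Lp ℝ 2 ν} (hf : f ∈ lpMeas ℝ ℝ m 2 ν) : condExpCLM ν hm f = f := by
  have : Fact (m ≤ mZ) := ⟨hm⟩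
  have hproj : condExpL2 ℝ ℝ hm f = ⟨f, hf⟩ := by
    simpa [condExpL2] using
      Submodule.orthogonalProjectionOnto_mem_subspace_eq_self (⟨f, hf⟩ : lpMeas ℝ ℝ m 2 ν)
  simp only [condExpCLM, ContinuousLinearMap.comp_apply, hproj]
  rfl

theorem lpOne_mem_lpMeas (ν : Measure Z) [IsFiniteMeasure ν] : lpOne ν ∈ lpMeas ℝ ℝ m 2 ν :=
  mem_lpMeas_iff_aestronglyMeasurable.2
    ⟨fun _ => (1 : ℝ), stronglyMeasurable_const, Lp.coeFn_const _ _ _⟩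

theorem lpMul_mem_lpMeas {ν : Measure Z} {g₁ g₂ : Lp ℝ 2 ν}
    (h₁ : g₁ ∈ lpMeas ℝ ℝ m 2 ν) (h₂ : g₂ ∈ lpMeas ℝ ℝ m 2 ν) :
    lpMul g₁ g₂ ∈ lpMeas ℝ ℝ m 2 ν := by
  rw [mem_lpMeas_iff_aestronglyMeasurable] at h₁ h₂ ⊢
  unfold lpMul
  split_ifs with hmem
  · obtain ⟨f₁, hf₁, he₁⟩ := h₁
    obtain ⟨f₂, hf₂, he₂⟩ := h₂
    refine ⟨f₁ * f₂, hf₁.mul hf₂, (hmem.coeFn_toLp).trans ?_⟩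
    filter_upwards [he₁, he₂] with x hx₁ hx₂
    simp [hx₁, hx₂]
  · exact ⟨0, stronglyMeasurable_const, Lp.coeFn_zero ℝ 2 ν⟩

variable (ν : Measure Z) [IsFiniteMeasure ν] {k : ℕ} {T : FSym k → (Lp ℝ 2 ν →L[ℝ] Lp ℝ 2 ν)}

theorem homFun_mem_lpMeas
    (hT : ∀ F f, f ∈ lpMeas ℝ ℝ m 2 ν → T F f ∈ lpMeas ℝ ℝ m 2 ν) :
    ∀ t : FTerm k, homFun ν T t ∈ lpMeas ℝ ℝ m 2 ν
  | .one => lpOne_mem_lpMeas ν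
  | .comp F t => hT F _ (homFun_mem_lpMeas hT t)
  | .mul t₁ t₂ => lpMul_mem_lpMeas (homFun_mem_lpMeas hT t₁) (homFun_mem_lpMeas hT t₂)

theorem homFun_condExp_compress (hm : m ≤ mZ)
    (hT : ∀ F f, f ∈ lpMeas ℝ ℝ m 2 ν → T F f ∈ lpMeas ℝ ℝ m 2 ν) :
    ∀ t : FTerm k, homFun ν (fun F => condExpCLM ν hm ∘L T F ∘L condExpCLM ν hm) t =
      homFun ν T t
  | .one => rfl
  | .comp F t => by
    have ht := homFun_mem_lpMeas ν hT t
    change condExpCLM ν hm (T F (condExpCLM ν hm _)) = T F _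
    rw [homFun_condExp_compress hm hT t, condExpCLM_apply_of_mem_lpMeas ν hm ht,
      condExpCLM_apply_of_mem_lpMeas ν hm (hT F _ ht)]
  | .mul t₁ t₂ => by
    change lpMul _ _ = lpMul _ _
    rw [homFun_condExp_compress hm hT t₁, homFun_condExp_compress hm hT t₂]

theorem homDen_condExp_compress (hm : m ≤ mZ)
    (hT : ∀ F f, f ∈ lpMeas ℝ ℝ m 2 ν → T F f ∈ lpMeas ℝ ℝ m 2 ν) (t : FTerm k) :
    homDen ν (fun F => condExpCLM ν hm ∘L T F ∘L condExpCLM ν hm) t = homDen ν T t := by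
  rw [homDen, homFun_condExp_compress ν hm hT, homDen]

end Compression

theorem stmt9 {X : Type*} [MeasurableSpace X] (μ : Measure X) [IsProbabilityMeasure μ]
    {k : ℕ}
    (T : FSym k → (Lp ℝ 2 (Measure.pi fun _ : Fin k => μ) →L[ℝ]
      Lp ℝ 2 (Measure.pi fun _ : Fin k => μ)))
    (C : SubSigma (Fin k → X))
    (hm : C.σ ≤ (MeasurableSpace.pi : MeasurableSpace (Fin k → X)))
    (hinv : ∀ (F : FSym k) (f : Lp ℝ 2 (Measure.pi fun _ : Fin k => μ)),
      f ∈ lpMeas ℝ ℝ C.σ 2 (Measure.pi fun _ : Fin k => μ) →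
      T F f ∈ lpMeas ℝ ℝ C.σ 2 (Measure.pi fun _ : Fin k => μ)) :
    ∀ t : FTerm k,
      homDen (Measure.pi fun _ : Fin k => μ)
        (fun F => condExpCLM (Measure.pi fun _ : Fin k => μ) hm ∘L T F ∘L
          condExpCLM (Measure.pi fun _ : Fin k => μ) hm) t =
      homDen (Measure.pi fun _ : Fin k => μ) T t :=
  homDen_condExp_compress _ hm hinv
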